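/- arXiv:2505.19585 — 2 statements merged into one kernel-verified Lean document; each statement's English description precedes it below -/
import Mathlib

section
/- Let e₁,...,eₙ be real numbers (validation residuals) and let q be any real number that is at least ⌈(n+1)(1−δ)⌉-th smallest among e₁,...,eₙ (for (n+1)(1−δ) ≤ n). If a new residual e_{n+1} is exchangeable with e₁,...,eₙ, then P(e_{n+1} ≤ q) ≥ 1 − δ. -/
/-!
Rank the `n + 1` residuals by the number of residuals strictly below each. For every `k ≤ n + 1`,
at least `k` of them have rank `< k` (the smallest residual outside that set would otherwise
itself have rank `< k`). Exchangeability gives all residuals the same probability of having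
rank `< k`, so this probability is at least `k / (n + 1)`. If `e_{n+1}` has rank `< k` it cannot
exceed `q`, since at least `k` of the calibration residuals are `≤ q`; taking
`k = ⌈(n + 1)(1 - δ)⌉` gives coverage `1 - δ`.
-/

open MeasureTheory Finset ENNReal

section StrictRank

variable {ι α : Type*} [Fintype ι] [LinearOrder α]

def strictRank (x : ι → α) (j : ι) : ℕ := #{i | x i < x j}

theorem strictRank_comp_perm (x : ι → α) (π : Equiv.Perm ι) (j : ι) :
    strictRank (x ∘ π) j = strictRank x (π j) :=
  card_equiv π (by simp)

theorem le_card_strictRank_lt (x : ι → α) {k : ℕ} (hk : k ≤ Fintype.card ι) :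
    k ≤ #{j | strictRank x j < k} := by
  classical
  set A : Finset ι := {j | strictRank x j < k}
  by_contra! hA
  have hAc : (Aᶜ).Nonempty := by
    rw [← card_pos, card_compl]
    omega
  obtain ⟨j, hjA, hjmin⟩ := exists_min_image Aᶜ x hAc
  have hbelow : ({i | x i < x j} : Finset ι) ⊆ A := fun i hi => by
    by_contra hiA
    exact (mem_filter.1 hi).2.not_ge (hjmin i (mem_compl.2 hiA))
  exact mem_compl.1 hjA (mem_filter.2 ⟨mem_univ j, (card_le_card hbelow).trans_lt hA⟩)

theorem card_le_strictRank_last {n : ℕ} (x : Fin (n + 1) → α) {q : α}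
    (hq : q < x (Fin.last n)) :
    #{i : Fin n | x i.castSucc ≤ q} ≤ strictRank x (Fin.last n) :=
  card_le_card_of_injOn Fin.castSucc
    (fun i hi => by simpa using (mem_filter.1 hi).2.trans_lt hq)
    (Fin.castSucc_injective n).injOn

end StrictRank

theorem measurable_strictRank {ι α : Type*} [Fintype ι] [LinearOrder α] [TopologicalSpace α]
    [OrderClosedTopology α] [SecondCountableTopology α] [MeasurableSpace α]
    [OpensMeasurableSpace α] (j : ι) :
    Measurable fun x : ι → α => strictRank x j := by
  simp only [strictRank, card_filter]
  exact measurable_sum _ fun i _ => Measurable.ite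
    (measurableSet_lt (measurable_pi_apply i) (measurable_pi_apply j))
    measurable_const measurable_const

open Classical in
theorem natCast_le_sum_measure {Ω ι : Type*} [MeasurableSpace Ω] [Fintype ι] (μ : Measure Ω)
    [IsProbabilityMeasure μ] {A : ι → Set Ω} (hA : ∀ j, MeasurableSet (A j)) {k : ℕ}
    (hk : ∀ ω, k ≤ #{j | ω ∈ A j}) :
    (k : ℝ≥0∞) ≤ ∑ j, μ (A j) := by
  have hpt : ∀ ω, (k : ℝ≥0∞) ≤ ∑ j, (A j).indicator 1 ω := fun ω => by
    simp only [Set.indicator_apply, Pi.one_apply, sum_boole]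
    exact_mod_cast hk ω
  calc (k : ℝ≥0∞) = ∫⁻ _, (k : ℝ≥0∞) ∂μ := by simp
    _ ≤ ∫⁻ ω, ∑ j, (A j).indicator 1 ω ∂μ := lintegral_mono hpt
    _ = ∑ j, μ (A j) := by
      rw [lintegral_finsetSum _ fun j _ => measurable_one.indicator (hA j)]
      simp only [lintegral_indicator_one (hA _)]

theorem measure_preimage_perm_eq {Ω ι β : Type*} [MeasurableSpace Ω] [MeasurableSpace β]
    {μ : Measure Ω} {e : ι → Ω → β} (hmeas : ∀ i, Measurable (e i)) {π : Equiv.Perm ι}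
    (hπ : Measure.map (fun ω i => e (π i) ω) μ = Measure.map (fun ω i => e i ω) μ)
    {S : Set (ι → β)} (hS : MeasurableSet S) :
    μ ((fun ω i => e (π i) ω) ⁻¹' S) = μ ((fun ω i => e i ω) ⁻¹' S) := by
  rw [← Measure.map_apply (measurable_pi_lambda _ fun i => hmeas (π i)) hS, hπ,
    Measure.map_apply (measurable_pi_lambda _ hmeas) hS]

theorem natCast_le_card_mul_measure_strictRank_lt {Ω ι α : Type*} [MeasurableSpace Ω]
    {μ : Measure Ω} [IsProbabilityMeasure μ] [Fintype ι] [LinearOrder α] [TopologicalSpace α]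
    [OrderClosedTopology α] [SecondCountableTopology α] [MeasurableSpace α]
    [OpensMeasurableSpace α] {e : ι → Ω → α} (hmeas : ∀ i, Measurable (e i))
    (hexch : ∀ π : Equiv.Perm ι,
      Measure.map (fun ω => fun i => e (π i) ω) μ = Measure.map (fun ω => fun i => e i ω) μ)
    (j₀ : ι) {k : ℕ} (hk : k ≤ Fintype.card ι) :
    (k : ℝ≥0∞) ≤ Fintype.card ι * μ {ω | strictRank (fun i => e i ω) j₀ < k} := by
  classical
  have hS : ∀ j, MeasurableSet {x : ι → α | strictRank x j < k} := fun j =>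
    measurableSet_lt (measurable_strictRank j) measurable_const
  have hsame : ∀ j, μ {ω | strictRank (fun i => e i ω) j < k}
      = μ {ω | strictRank (fun i => e i ω) j₀ < k} := fun j => by
    have hswap : {ω | strictRank (fun i => e i ω) j < k}
        = (fun ω i => e (Equiv.swap j j₀ i) ω) ⁻¹' {x | strictRank x j₀ < k} := by
      ext ω
      change strictRank (fun i => e i ω) j < k
        ↔ strictRank ((fun i => e i ω) ∘ Equiv.swap j j₀) j₀ < k
      rw [strictRank_comp_perm, Equiv.swap_apply_right]
    rw [hswap, measure_preimage_perm_eq hmeas (hexch _) (hS j₀)]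
    rfl
  calc (k : ℝ≥0∞) ≤ ∑ j, μ {ω | strictRank (fun i => e i ω) j < k} :=
        natCast_le_sum_measure μ (A := fun j => {ω | strictRank (fun i => e i ω) j < k})
          (fun j => measurable_pi_lambda _ hmeas (hS j))
          fun ω => by
            simp only [Set.mem_ofPred_eq]
            convert le_card_strictRank_lt (fun i => e i ω) hk
    _ = Fintype.card ι * μ {ω | strictRank (fun i => e i ω) j₀ < k} := by
        simp [hsame]

theorem ofReal_le_of_natCast_le_mul {N k : ℕ} {a : ℝ} {p : ℝ≥0∞} (hN : N ≠ 0)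
    (ha : N * a ≤ k) (hp : (k : ℝ≥0∞) ≤ N * p) : ENNReal.ofReal a ≤ p := by
  rw [← ENNReal.mul_le_mul_iff_right (Nat.cast_ne_zero.2 hN) (natCast_ne_top N)]
  calc (N : ℝ≥0∞) * ENNReal.ofReal a = ENNReal.ofReal (N * a) := by
        rw [ENNReal.ofReal_mul (Nat.cast_nonneg _), ofReal_natCast]
    _ ≤ ENNReal.ofReal k := ENNReal.ofReal_le_ofReal ha
    _ = k := ofReal_natCast k
    _ ≤ N * p := hp

theorem split_conformal_coverage_general {Ω : Type*} [MeasurableSpace Ω]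
    (μ : Measure Ω) [IsProbabilityMeasure μ] (n : ℕ) (δ : ℝ)
    (e : Fin (n + 1) → Ω → ℝ) (hmeas : ∀ i, Measurable (e i))
    (hexch : ∀ π : Equiv.Perm (Fin (n + 1)),
      Measure.map (fun ω => fun i => e (π i) ω) μ = Measure.map (fun ω => fun i => e i ω) μ)
    (Q : (Fin n → ℝ) → ℝ)
    (hQ : ∀ v : Fin n → ℝ,
      (⌈((n : ℝ) + 1) * (1 - δ)⌉.toNat) ≤
        (Finset.univ.filter fun i : Fin n => v i ≤ Q v).card) :
    ENNReal.ofReal (1 - δ) ≤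
      μ {ω | e (Fin.last n) ω ≤ Q fun i => e i.castSucc ω} := by
  have hceil : ((n : ℝ) + 1) * (1 - δ) ≤ (⌈((n : ℝ) + 1) * (1 - δ)⌉.toNat : ℝ) :=
    (Int.le_ceil _).trans (by exact_mod_cast Int.self_le_toNat _)
  generalize ⌈((n : ℝ) + 1) * (1 - δ)⌉.toNat = k at hQ hceil
  have hkn : k ≤ n := (hQ 0).trans ((card_filter_le _ _).trans_eq (card_fin n))
  have hcover : {ω | strictRank (fun i => e i ω) (Fin.last n) < k}
      ⊆ {ω | e (Fin.last n) ω ≤ Q fun i => e i.castSucc ω} := fun ω hω =>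
    not_lt.1 fun hlt => hω.not_ge ((hQ _).trans (card_le_strictRank_last (fun i => e i ω) hlt))
  refine ofReal_le_of_natCast_le_mul (N := n + 1) (k := k) n.succ_ne_zero ?_ ?_
  · exact_mod_cast hceil
  · calc (k : ℝ≥0∞) ≤ (n + 1 : ℕ) * μ {ω | strictRank (fun i => e i ω) (Fin.last n) < k} := by
          simpa using natCast_le_card_mul_measure_strictRank_lt hmeas hexch (Fin.last n)
            (by rw [Fintype.card_fin]; omega)
      _ ≤ _ := by gcongr

theorem split_conformal_coverage {Ω : Type*} [MeasurableSpace Ω]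
    (μ : Measure Ω) [IsProbabilityMeasure μ] (n : ℕ) (δ : ℝ)
    (e : Fin (n + 1) → Ω → ℝ) (hmeas : ∀ i, Measurable (e i))
    (hexch : ∀ π : Equiv.Perm (Fin (n + 1)),
      Measure.map (fun ω => fun i => e (π i) ω) μ = Measure.map (fun ω => fun i => e i ω) μ)
    (hk : ((n : ℝ) + 1) * (1 - δ) ≤ n)
    (Q : (Fin n → ℝ) → ℝ) (hQmeas : Measurable Q)
    (hQ : ∀ v : Fin n → ℝ,
      (⌈((n : ℝ) + 1) * (1 - δ)⌉.toNat) ≤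
        (Finset.univ.filter fun i : Fin n => v i ≤ Q v).card) :
    ENNReal.ofReal (1 - δ) ≤
      μ {ω | e (Fin.last n) ω ≤ Q fun i => e i.castSucc ω} :=
  split_conformal_coverage_general μ n δ e hmeas hexch Q hQ
end

section
/- Let e₁,...,e_{n+1} be exchangeable nonnegative random variables and u₁,...,u_{n+1} positive constants (uncertainty measures). Define scores sᵢ = eᵢ/uᵢ and suppose s₁,...,s_{n+1} are exchangeable. Let q be the ⌈(n+1)(1−δ)⌉-th smallest of s₁,...,sₙ. Then P(e_{n+1} ≤ u_{n+1}·q) ≥ 1 − δ. -/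
/-!
Write `k = ⌈(n+1)(1-δ)⌉` and call index `i` *covered* by the score vector `s` if
`s i ≤ Q (s without its i-th entry)`. Deterministically the `k` smallest scores are covered: if the
`m`-th smallest (`m < k`) were not, every other score `≤ Q` of the rest would lie strictly below
it, so there would be at most `m < k` of them. Exchangeability makes all `n + 1` coverage events
equally likely, so `k ≤ (n + 1) · P(last index covered)`, and since `u > 0` that event is
`e_{n+1} ≤ u_{n+1} · q`.
-/

open MeasureTheory Finset
open scoped ENNReal

def Fin.lastToPerm {n : ℕ} (i : Fin (n + 1)) : Equiv.Perm (Fin (n + 1)) :=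
  (finSuccEquiv' (Fin.last n)).trans (finSuccEquiv' i).symm

@[simp] lemma Fin.lastToPerm_last {n : ℕ} (i : Fin (n + 1)) : i.lastToPerm (Fin.last n) = i := by
  simp [Fin.lastToPerm]

@[simp] lemma Fin.lastToPerm_castSucc {n : ℕ} (i : Fin (n + 1)) (j : Fin n) :
    i.lastToPerm j.castSucc = i.succAbove j := by
  simp [Fin.lastToPerm, finSuccEquiv'_last_apply_castSucc]

section Counting

variable {α : Type*} [LinearOrder α]

lemma card_filter_lt_sort_le {n : ℕ} (v : Fin n → α) (m : Fin n) :
    #{i | v i < v (Tuple.sort v m)} ≤ m := by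
  calc #{i | v i < v (Tuple.sort v m)} ≤ #(Iio m) := by
        refine card_le_card_of_injOn (Tuple.sort v).symm (fun i hi => ?_)
          (Tuple.sort v).symm.injective.injOn
        simp only [coe_filter, mem_univ, true_and, Set.mem_ofPred_eq] at hi
        simp only [coe_Iio, Set.mem_Iio]
        by_contra! hle
        have := Tuple.monotone_sort v hle
        simp only [Function.comp_apply, Equiv.apply_symm_apply] at this
        exact lt_irrefl _ (this.trans_lt hi)
    _ = m := Fin.card_Iio m

lemma le_card_filter_le_comp_succAbove {n k : ℕ} (Q : (Fin n → α) → α)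
    (hQ : ∀ w : Fin n → α, k ≤ #{j | w j ≤ Q w}) (v : Fin (n + 1) → α) :
    k ≤ #{i | v i ≤ Q (v ∘ i.succAbove)} := by
  set σ := Tuple.sort v
  have hkn : k < n + 1 :=
    Nat.lt_succ_of_le <| (hQ (v ∘ Fin.castSucc)).trans <| (card_filter_le _ _).trans_eq (by simp)
  have hsorted_le : ∀ m : Fin (n + 1), (m : ℕ) < k → v (σ m) ≤ Q (v ∘ (σ m).succAbove) := by
    intro m hm
    by_contra! hlt
    set w := v ∘ (σ m).succAbove
    have : k ≤ m := calc
      k ≤ #{j | w j ≤ Q w} := hQ w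
      _ ≤ #{j | w j < v (σ m)} := card_le_card fun j hj => by
        simp only [mem_filter, mem_univ, true_and] at hj ⊢
        exact hj.trans_lt hlt
      _ ≤ #{i | v i < v (σ m)} :=
        card_le_card_of_injOn (σ m).succAbove (fun j hj => by simpa [w] using hj)
          Fin.succAbove_right_injective.injOn
      _ ≤ m := card_filter_lt_sort_le v m
    omega
  calc k = #((Iio (⟨k, hkn⟩ : Fin (n + 1))).image σ) := by
        rw [card_image_of_injective _ σ.injective]; simp
    _ ≤ _ := card_le_card fun i hi => by
        obtain ⟨m, hm, rfl⟩ := mem_image.mp hi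
        simpa using hsorted_le m (by simpa [Fin.lt_def] using hm)

end Counting

open Classical in
lemma natCast_mul_measure_univ_le_sum_measure {X ι : Type*} [MeasurableSpace X] [Fintype ι]
    (ν : Measure X) {s : ι → Set X} (hs : ∀ i, MeasurableSet (s i)) {k : ℕ}
    (hk : ∀ x, k ≤ #{i | x ∈ s i}) :
    k * ν Set.univ ≤ ∑ i, ν (s i) := calc
  k * ν Set.univ = ∫⁻ _, (k : ℝ≥0∞) ∂ν := (lintegral_const _).symm
  _ ≤ ∫⁻ x, ∑ i, (s i).indicator 1 x ∂ν := lintegral_mono fun x => by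
      simpa [Set.indicator_apply, sum_boole] using hk x
  _ = ∑ i, ν (s i) := by
      rw [lintegral_finsetSum _ fun i _ => measurable_one.indicator (hs i)]
      simp [lintegral_indicator_one (hs _)]

section Exchangeable

variable {α : Type*} [LinearOrder α] [TopologicalSpace α] [OrderClosedTopology α]
  [SecondCountableTopology α] [MeasurableSpace α] [OpensMeasurableSpace α] {n : ℕ}
  {Q : (Fin n → α) → α}

lemma measurableSet_le_comp_succAbove (hQ : Measurable Q) (i : Fin (n + 1)) :
    MeasurableSet {v : Fin (n + 1) → α | v i ≤ Q (v ∘ i.succAbove)} :=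
  measurableSet_le (measurable_pi_apply i) (hQ.comp (by fun_prop))

variable {ν : Measure (Fin (n + 1) → α)}

lemma measure_le_comp_succAbove_eq_last
    (hν : ∀ π : Equiv.Perm (Fin (n + 1)), ν.map (fun v => v ∘ π) = ν) (hQ : Measurable Q)
    (i : Fin (n + 1)) :
    ν {v | v i ≤ Q (v ∘ i.succAbove)} = ν {v | v (Fin.last n) ≤ Q (v ∘ Fin.castSucc)} := by
  have hpre : (fun v => v ∘ i.lastToPerm) ⁻¹' {v | v (Fin.last n) ≤ Q (v ∘ Fin.castSucc)} =
      {v | v i ≤ Q (v ∘ i.succAbove)} := by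
    ext v; simp [Function.comp_def]
  rw [← hpre, ← Measure.map_apply (by fun_prop)
    (by simpa using measurableSet_le_comp_succAbove hQ (Fin.last n)), hν]

theorem conformal_coverage_of_perm_invariant
    (hν : ∀ π : Equiv.Perm (Fin (n + 1)), ν.map (fun v => v ∘ π) = ν) (hQm : Measurable Q)
    {k : ℕ} (hQ : ∀ w : Fin n → α, k ≤ #{j | w j ≤ Q w}) :
    k * ν Set.univ ≤ (n + 1) * ν {v | v (Fin.last n) ≤ Q (v ∘ Fin.castSucc)} := calc
  k * ν Set.univ ≤ ∑ i, ν {v | v i ≤ Q (v ∘ i.succAbove)} :=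
    natCast_mul_measure_univ_le_sum_measure ν (measurableSet_le_comp_succAbove hQm)
      fun v => by simpa using le_card_filter_le_comp_succAbove Q hQ v
  _ = (n + 1) * ν {v | v (Fin.last n) ≤ Q (v ∘ Fin.castSucc)} := by
    simp [measure_le_comp_succAbove_eq_last hν hQm]

end Exchangeable

lemma ofReal_le_ceil_toNat (x : ℝ) : ENNReal.ofReal x ≤ (⌈x⌉.toNat : ℝ≥0∞) := by
  rw [Int.ceil_toNat, ← ENNReal.ofReal_natCast]
  exact ENNReal.ofReal_le_ofReal (Nat.le_ceil x)

theorem adaptive_conformal_coverage_general {Ω : Type*} [MeasurableSpace Ω]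
    (μ : Measure Ω) [IsProbabilityMeasure μ] (n : ℕ) (δ : ℝ)
    (e : Fin (n + 1) → Ω → ℝ) (hmeas : ∀ i, Measurable (e i))
    (u : Fin (n + 1) → ℝ) (hu : ∀ i, 0 < u i)
    (hexch : ∀ π : Equiv.Perm (Fin (n + 1)),
      Measure.map (fun ω => fun i => e (π i) ω / u (π i)) μ =
        Measure.map (fun ω => fun i => e i ω / u i) μ)
    (Q : (Fin n → ℝ) → ℝ) (hQmeas : Measurable Q)
    (hQ : ∀ v : Fin n → ℝ,
      (⌈((n : ℝ) + 1) * (1 - δ)⌉.toNat) ≤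
        (Finset.univ.filter fun i : Fin n => v i ≤ Q v).card) :
    ENNReal.ofReal (1 - δ) ≤
      μ {ω | e (Fin.last n) ω ≤
        u (Fin.last n) * Q fun i => e i.castSucc ω / u i.castSucc} := by
  set score : Ω → Fin (n + 1) → ℝ := fun ω i => e i ω / u i
  have hscore : Measurable score := by fun_prop
  have hcount := conformal_coverage_of_perm_invariant (ν := μ.map score)
    (fun π => by rw [Measure.map_map (by fun_prop) hscore]; exact hexch π) hQmeas hQ
  have hevent : μ {ω | e (Fin.last n) ω ≤
      u (Fin.last n) * Q fun i => e i.castSucc ω / u i.castSucc} =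
      μ.map score {v | v (Fin.last n) ≤ Q (v ∘ Fin.castSucc)} := by
    rw [Measure.map_apply hscore
      (by simpa using measurableSet_le_comp_succAbove hQmeas (Fin.last n))]
    congr 1; ext ω
    simp [score, Function.comp_def, div_le_iff₀' (hu _)]
  have : IsProbabilityMeasure (μ.map score) :=
    Measure.isProbabilityMeasure_map hscore.aemeasurable
  rw [measure_univ, mul_one] at hcount
  rw [hevent, ← ENNReal.mul_le_mul_iff_right (a := n + 1) (by positivity) (by finiteness)]
  calc (n + 1 : ℝ≥0∞) * ENNReal.ofReal (1 - δ) = ENNReal.ofReal ((n + 1) * (1 - δ)) := by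
        rw [ENNReal.ofReal_mul (by positivity)]; norm_cast
    _ ≤ _ := (ofReal_le_ceil_toNat _).trans hcount

theorem adaptive_conformal_coverage {Ω : Type*} [MeasurableSpace Ω]
    (μ : Measure Ω) [IsProbabilityMeasure μ] (n : ℕ) (δ : ℝ)
    (e : Fin (n + 1) → Ω → ℝ) (hmeas : ∀ i, Measurable (e i))
    (hnonneg : ∀ i ω, 0 ≤ e i ω)
    (u : Fin (n + 1) → ℝ) (hu : ∀ i, 0 < u i)
    (hexch : ∀ π : Equiv.Perm (Fin (n + 1)),
      Measure.map (fun ω => fun i => e (π i) ω / u (π i)) μ =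
        Measure.map (fun ω => fun i => e i ω / u i) μ)
    (hk : ((n : ℝ) + 1) * (1 - δ) ≤ n)
    (Q : (Fin n → ℝ) → ℝ) (hQmeas : Measurable Q)
    (hQ : ∀ v : Fin n → ℝ,
      (⌈((n : ℝ) + 1) * (1 - δ)⌉.toNat) ≤
        (Finset.univ.filter fun i : Fin n => v i ≤ Q v).card) :
    ENNReal.ofReal (1 - δ) ≤
      μ {ω | e (Fin.last n) ω ≤
        u (Fin.last n) * Q fun i => e i.castSucc ω / u i.castSucc} :=
  adaptive_conformal_coverage_general μ n δ e hmeas u hu hexch Q hQmeas hQ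
end
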